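/- arXiv:2504.18923 — 2 statements merged into one kernel-verified Lean document; each statement's English description precedes it below -/
import Mathlib

section
/- For type $A_r$ (real split case), with $2\rho$ and $\Theta$ as in the table, the maximum over positive roots $\alpha \in \{e_i - e_j : 1 \le i < j \le r+1\}$ of $\langle \alpha, 2\rho - \Theta\rangle$ equals $2r-1$, attained at $\alpha = e_1 - e_{r+1}$. -/
/-! The root `e_i - e_j` pairs with `v = 2ρ - Θ` to `v i - v j`. Since `2ρ` drops by `2` at each
step while `Θ` stays in `[-1/2, 1/2]`, taking the value `1/2` at the first coordinate and `-1/2` at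
the last, `v` is largest at the first coordinate (`r - 1/2`) and smallest at the last
(`1/2 - r`). So the maximum over `i < j` is attained at `e_1 - e_{r+1}` and equals `2r - 1`. -/

open scoped RealInnerProductSpace

theorem EuclideanSpace.inner_single_sub_single {ι : Type*} [Fintype ι] [DecidableEq ι]
    (i j : ι) (v : EuclideanSpace ℝ ι) :
    ⟪EuclideanSpace.single i (1 : ℝ) - EuclideanSpace.single j 1, v⟫ = v i - v j := by
  simp [inner_sub_left, EuclideanSpace.inner_single_left]

theorem isGreatest_sub_of_forall_le_zero_of_forall_last_le {n : ℕ} (hn : 0 < n)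
    (v : Fin (n + 1) → ℝ) (h_first : ∀ i, v i ≤ v 0)
    (h_last : ∀ j, v (Fin.last n) ≤ v j) :
    IsGreatest {x : ℝ | ∃ i j : Fin (n + 1), i < j ∧ x = v i - v j}
      (v 0 - v (Fin.last n)) := by
  refine ⟨⟨0, Fin.last n, by simpa [Fin.lt_def] using hn, rfl⟩, ?_⟩
  rintro x ⟨i, j, -, rfl⟩
  linarith [h_first i, h_last j]

section TypeA

variable {r : ℕ}

def IsTwoRho (twoRho : EuclideanSpace ℝ (Fin (r + 1))) : Prop :=
  ∀ i : Fin (r + 1), twoRho i = (r : ℝ) + 2 - 2 * ((i : ℕ) + 1)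

def IsTheta (Θ : EuclideanSpace ℝ (Fin (r + 1))) : Prop :=
  ∀ i : Fin (r + 1), Θ i =
    if 2 * ((i : ℕ) + 1) < r + 2 then (1 / 2 : ℝ)
    else if 2 * ((i : ℕ) + 1) = r + 2 then 0 else -(1 / 2)

variable {twoRho Θ : EuclideanSpace ℝ (Fin (r + 1))}

theorem IsTheta.mem_Icc (hΘ : IsTheta Θ) (i : Fin (r + 1)) :
    Θ i ∈ Set.Icc (-(1 / 2)) (1 / 2) := by
  rw [hΘ]
  split_ifs <;> norm_num

theorem twoRho_sub_theta_zero (hr : 1 ≤ r) (hρ : IsTwoRho twoRho) (hΘ : IsTheta Θ) :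
    (twoRho - Θ) 0 = (r : ℝ) - 1 / 2 := by
  rw [PiLp.sub_apply, hρ, hΘ, Fin.val_zero, if_pos (by omega)]
  push_cast
  ring

theorem twoRho_sub_theta_last (hr : 1 ≤ r) (hρ : IsTwoRho twoRho) (hΘ : IsTheta Θ) :
    (twoRho - Θ) (Fin.last r) = 1 / 2 - (r : ℝ) := by
  rw [PiLp.sub_apply, hρ, hΘ, Fin.val_last, if_neg (by omega), if_neg (by omega)]
  ring

theorem twoRho_sub_theta_le_zero (hr : 1 ≤ r) (hρ : IsTwoRho twoRho) (hΘ : IsTheta Θ)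
    (i : Fin (r + 1)) : (twoRho - Θ) i ≤ (twoRho - Θ) 0 := by
  obtain rfl | hi := eq_or_ne i 0
  · rfl
  have hi : (1 : ℝ) ≤ (i : ℕ) := by
    exact_mod_cast Nat.one_le_iff_ne_zero.mpr (Fin.val_ne_of_ne hi)
  rw [twoRho_sub_theta_zero hr hρ hΘ, PiLp.sub_apply, hρ]
  linarith [(hΘ.mem_Icc i).1]

theorem twoRho_sub_theta_last_le (hr : 1 ≤ r) (hρ : IsTwoRho twoRho) (hΘ : IsTheta Θ)
    (j : Fin (r + 1)) : (twoRho - Θ) (Fin.last r) ≤ (twoRho - Θ) j := by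
  obtain rfl | hj := eq_or_ne j (Fin.last r)
  · rfl
  have hj : ((j : ℕ) : ℝ) + 1 ≤ r := by exact_mod_cast Fin.val_lt_last hj
  rw [twoRho_sub_theta_last hr hρ hΘ, PiLp.sub_apply, hρ]
  linarith [(hΘ.mem_Icc j).2]

end TypeA

theorem stmt_2 (r : ℕ) (hr : 1 ≤ r)
    (twoRho Θ : EuclideanSpace ℝ (Fin (r + 1)))
    (hρ : ∀ i : Fin (r + 1), twoRho i = (r : ℝ) + 2 - 2 * ((i : ℕ) + 1))
    (hΘ : ∀ i : Fin (r + 1), Θ i =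
      if 2 * ((i : ℕ) + 1) < r + 2 then (1 / 2 : ℝ)
      else if 2 * ((i : ℕ) + 1) = r + 2 then 0 else -(1 / 2)) :
    IsGreatest {x : ℝ | ∃ i j : Fin (r + 1), i < j ∧
        x = ⟪EuclideanSpace.single i (1 : ℝ) - EuclideanSpace.single j 1, twoRho - Θ⟫}
      (2 * r - 1) ∧
    ⟪EuclideanSpace.single (0 : Fin (r + 1)) (1 : ℝ) - EuclideanSpace.single (Fin.last r) 1,
        twoRho - Θ⟫ = 2 * r - 1 := by
  have h_extreme : (twoRho - Θ) 0 - (twoRho - Θ) (Fin.last r) = 2 * r - 1 := by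
    rw [twoRho_sub_theta_zero hr hρ hΘ, twoRho_sub_theta_last hr hρ hΘ]
    ring
  refine ⟨?_, by rw [EuclideanSpace.inner_single_sub_single, h_extreme]⟩
  simp_rw [EuclideanSpace.inner_single_sub_single, ← h_extreme]
  exact isGreatest_sub_of_forall_le_zero_of_forall_last_le hr _
    (twoRho_sub_theta_le_zero hr hρ hΘ) (twoRho_sub_theta_last_le hr hρ hΘ)
end

section
/- Let $r = 2m+1$ be odd, $m \geq 1$, and $k \geq 1$. For type $B_r$ with short root multiplicity $k$, let $2\rho = \sum_{i=1}^r(2r-2i+k)e_i$ and $\Theta = e_1+\cdots+e_m + \frac{1}{2}e_{m+1}$. Then $\langle \Theta, 2\rho - \Theta\rangle = 3m^2 + km + m + \frac{k}{2} - \frac{1}{4}$ and $\frac{\langle \Theta, 2\rho-\Theta\rangle}{8m-4+2k} > \frac{3r}{16}$. -/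
open scoped RealInnerProductSpace

open Finset

/-! Pairing with Θ sums the first m coordinates and adds half of the (m+1)-st, and the
coordinates of 2ρ form an arithmetic progression; this gives ⟪Θ, 2ρ⟫ and ⟪Θ, Θ⟫ = m + 1/4 in
closed form, after which the inequality is a polynomial one in m and k. -/

lemma inner_eq_sum_range_add_half {r m : ℕ} (hmr : m < r) (Θ v : EuclideanSpace ℝ (Fin r))
    (f : ℕ → ℝ) (hΘ : ∀ i : Fin r, Θ i =
      if (i : ℕ) < m then (1 : ℝ) else if (i : ℕ) = m then 1 / 2 else 0)
    (hv : ∀ i : Fin r, v i = f i) :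
    ⟪Θ, v⟫ = ∑ i ∈ range m, f i + f m / 2 := by
  set θ : ℕ → ℝ := fun i => if i < m then 1 else if i = m then 1 / 2 else 0
  have hterm : ∀ i : Fin r, inner ℝ (Θ i) (v i) = f i * θ i := fun i => by
    simp only [RCLike.inner_apply, conj_trivial, hΘ, hv, θ]
  obtain ⟨n, rfl⟩ := Nat.exists_eq_add_of_le (Nat.succ_le_of_lt hmr)
  have htail : ∑ i ∈ range n, f (m + 1 + i) * θ (m + 1 + i) = 0 :=
    sum_eq_zero fun i _ => by
      simp [θ, show ¬ m + 1 + i < m by omega, show m + 1 + i ≠ m by omega]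
  rw [PiLp.inner_apply, Fintype.sum_congr _ _ hterm,
    Fin.sum_univ_eq_sum_range (fun i => f i * θ i), sum_range_add, htail, add_zero,
    sum_range_succ]
  congr 1
  · exact sum_congr rfl fun i hi => by simp [θ, mem_range.mp hi]
  · norm_num [θ]
    ring

lemma inner_self_eq_add_quarter {r m : ℕ} (hmr : m < r) (Θ : EuclideanSpace ℝ (Fin r))
    (hΘ : ∀ i : Fin r, Θ i =
      if (i : ℕ) < m then (1 : ℝ) else if (i : ℕ) = m then 1 / 2 else 0) :
    ⟪Θ, Θ⟫ = m + 1 / 4 := by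
  rw [inner_eq_sum_range_add_half hmr Θ Θ
    (fun i => if i < m then 1 else if i = m then 1 / 2 else 0) hΘ hΘ,
    sum_congr rfl fun i hi => if_pos (mem_range.mp hi)]
  norm_num

lemma inner_twoRho_eq {r m : ℕ} (k : ℝ) (hmr : m < r) (twoRho Θ : EuclideanSpace ℝ (Fin r))
    (hρ : ∀ i : Fin r, twoRho i = 2 * (r : ℝ) - 2 * ((i : ℕ) + 1) + k)
    (hΘ : ∀ i : Fin r, Θ i =
      if (i : ℕ) < m then (1 : ℝ) else if (i : ℕ) = m then 1 / 2 else 0) :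
    ⟪Θ, twoRho⟫ = m * (2 * r - m - 1 + k) + r - m - 1 + k / 2 := by
  have hsum : ∀ n : ℕ, ∑ i ∈ range n, (2 * (r : ℝ) - 2 * ((i : ℝ) + 1) + k) =
      n * (2 * r - n - 1 + k) := fun n => by
    induction n with
    | zero => simp
    | succ n ih => rw [sum_range_succ, ih]; push_cast; ring
  rw [inner_eq_sum_range_add_half hmr Θ twoRho
    (fun i => 2 * (r : ℝ) - 2 * ((i : ℝ) + 1) + k) hΘ hρ, hsum]
  ring

lemma three_mul_two_mul_add_one_div_sixteen_lt {m k : ℝ} (hm : 1 ≤ m) (hk : 0 ≤ k) :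
    3 * (2 * m + 1) / 16 < (3 * m ^ 2 + k * m + m + k / 2 - 1 / 4) / (8 * m - 4 + 2 * k) := by
  rw [div_lt_div_iff₀ (by norm_num) (by linarith)]
  -- the two sides differ by (4km + 16m + 2k + 8) / 16
  nlinarith [mul_nonneg (by linarith : (0 : ℝ) ≤ m) hk]

theorem stmt_12_general (m r k : ℕ) (hm : 1 ≤ m) (hr : r = 2 * m + 1)
    (twoRho Θ : EuclideanSpace ℝ (Fin r))
    (hρ : ∀ i : Fin r, twoRho i = 2 * (r : ℝ) - 2 * ((i : ℕ) + 1) + k)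
    (hΘ : ∀ i : Fin r, Θ i =
      if (i : ℕ) < m then (1 : ℝ) else if (i : ℕ) = m then 1 / 2 else 0) :
    ⟪Θ, twoRho - Θ⟫ = 3 * (m : ℝ) ^ 2 + k * m + m + k / 2 - 1 / 4 ∧
    ⟪Θ, twoRho - Θ⟫ / (8 * m - 4 + 2 * k) > 3 * r / 16 := by
  subst hr
  have hmr : m < 2 * m + 1 := by omega
  have hval : ⟪Θ, twoRho - Θ⟫ = 3 * (m : ℝ) ^ 2 + k * m + m + k / 2 - 1 / 4 := by
    rw [inner_sub_right, inner_twoRho_eq k hmr twoRho Θ hρ hΘ,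
      inner_self_eq_add_quarter hmr Θ hΘ]
    push_cast
    ring
  refine ⟨hval, ?_⟩
  rw [hval]
  push_cast
  exact three_mul_two_mul_add_one_div_sixteen_lt (by exact_mod_cast hm) k.cast_nonneg

theorem stmt_12 (m r k : ℕ) (hm : 1 ≤ m) (hr : r = 2 * m + 1) (hk : 1 ≤ k)
    (twoRho Θ : EuclideanSpace ℝ (Fin r))
    (hρ : ∀ i : Fin r, twoRho i = 2 * (r : ℝ) - 2 * ((i : ℕ) + 1) + k)
    (hΘ : ∀ i : Fin r, Θ i =
      if (i : ℕ) < m then (1 : ℝ) else if (i : ℕ) = m then 1 / 2 else 0) :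
    ⟪Θ, twoRho - Θ⟫ = 3 * (m : ℝ) ^ 2 + k * m + m + k / 2 - 1 / 4 ∧
    ⟪Θ, twoRho - Θ⟫ / (8 * m - 4 + 2 * k) > 3 * r / 16 :=
  stmt_12_general m r k hm hr twoRho Θ hρ hΘ
end
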